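/- arXiv:1304.0106 — 3 statements merged into one kernel-verified Lean document; each statement's English description precedes it below -/
import Mathlib

section
/- For every complete Boolean algebra B the following conditions are equivalent: (a) B is not (ω,2)-distributive; (b) White has a winning strategy in the game G₁ on B; (c) White has a winning strategy in the game G₂ on B. -/
/-- For `p ∈ B⁺` and a move `q ≤ p`, Black's choice: `q⁰ = q`, `q¹ = p \ q`. -/
def pickMove {B : Type*} [CompleteBooleanAlgebra B] (p q : B) (i : Bool) : B :=
  if i then p \ q else q

section Games

variable {B : Type*} [CompleteBooleanAlgebra B]

/-- White wins a play of `G₁` iff `⨅ₙ pₙ^{iₙ} = 0`. -/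
def WinG1 (p : B) (pn : ℕ → B) (i : ℕ → Bool) : Prop :=
  (⨅ n, pickMove p (pn n) (i n)) = ⊥

/-- White wins a play of `G₂` iff `⨆ₖ ⨅_{n ≥ k} pₙ^{iₙ} = 0`. -/
def WinG2 (p : B) (pn : ℕ → B) (i : ℕ → Bool) : Prop :=
  (⨆ k, ⨅ n, ⨅ _ : k ≤ n, pickMove p (pn n) (i n)) = ⊥

/-- White wins a play of `G₃` iff `⨆_{A ⊆ ω infinite} ⨅_{n ∈ A} pₙ^{iₙ} = 0`. -/
def WinG3 (p : B) (pn : ℕ → B) (i : ℕ → Bool) : Prop :=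
  (⨆ A ∈ {A : Set ℕ | A.Infinite}, ⨅ n ∈ A, pickMove p (pn n) (i n)) = ⊥

/-- White wins a play of `G₄` iff `⨅ₖ ⨆_{n ≥ k} pₙ^{iₙ} = 0`. -/
def WinG4 (p : B) (pn : ℕ → B) (i : ℕ → Bool) : Prop :=
  (⨅ k, ⨆ n, ⨆ _ : k ≤ n, pickMove p (pn n) (i n)) = ⊥

/-- White's moves when following strategy `σ` against Black's play `i`:
the `n`-th move depends on Black's first `n` moves. -/
def whitePlays (σ : List Bool → B) (i : ℕ → Bool) (n : ℕ) : B :=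
  σ (List.ofFn fun k : Fin n => i k)

/-- Black's moves when following strategy `τ` against White's play `p, p₀, p₁, …`:
the `n`-th move depends on `p` and on `p₀, …, pₙ`. -/
def blackPlays (τ : B → List B → Bool) (p : B) (pn : ℕ → B) (n : ℕ) : Bool :=
  τ p (List.ofFn fun k : Fin (n + 1) => pn k)

/-- White has a winning strategy in the game with winning condition `Win`:
an initial move `p ∈ B⁺` and a rule `σ` giving legal moves in `(0,p)`
such that White wins every play in which he follows it. -/
def WhiteWS (Win : B → (ℕ → B) → (ℕ → Bool) → Prop) : Prop :=
  ∃ p : B, p ≠ ⊥ ∧ ∃ σ : List Bool → B,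
    (∀ s : List Bool, σ s ∈ Set.Ioo ⊥ p) ∧
    ∀ i : ℕ → Bool, Win p (whitePlays σ i) i

/-- Black has a winning strategy in the game with winning condition `Win`:
a rule `τ` such that for every legal play of White, Black following `τ` wins
(i.e. White does not win). -/
def BlackWS (Win : B → (ℕ → B) → (ℕ → Bool) → Prop) : Prop :=
  ∃ τ : B → List B → Bool,
    ∀ p : B, p ≠ ⊥ → ∀ pn : ℕ → B, (∀ n, pn n ∈ Set.Ioo ⊥ p) →
      ¬ Win p pn (blackPlays τ p pn)

/-- `aⁱ` for `i ∈ {0,1}`: `a⁰ = a`, `a¹ = aᶜ`. -/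
def compPow (a : B) (i : Bool) : B :=
  if i then aᶜ else a

end Games

/-- A complete Boolean algebra is `(ω,2)`-distributive iff
`⨆_{f : ω → 2} ⨅ₙ aₙ^{f(n)} = 1` for every sequence `⟨aₙ⟩`. -/
def OmegaTwoDistributive (B : Type*) [CompleteBooleanAlgebra B] : Prop :=
  ∀ a : ℕ → B, (⨆ f : ℕ → Bool, ⨅ n, compPow (a n) (f n)) = ⊤

/-- `w : 2^{<ω} → B` satisfies (∗) below `p`: for every `i : ω → 2`,
`⨆_{A ⊆ ω infinite} ⨅_{n ∈ A} w_{i↾n}^{i(n)} = 0`. -/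
def SatisfiesStar {B : Type*} [CompleteBooleanAlgebra B] (p : B) (w : List Bool → B) : Prop :=
  ∀ i : ℕ → Bool,
    (⨆ A ∈ {A : Set ℕ | A.Infinite}, ⨅ n ∈ A,
      pickMove p (w (List.ofFn fun k : Fin n => i k)) (i n)) = ⊥

/-!
If `B` is not `(ω,2)`-distributive, some `p ≠ 0` is disjoint from every branch
`⨅ₙ aₙ^{f(n)}` of a sequence `⟨aₙ⟩`; relativised to `p` this gives moves `cₙ ∈ (0,p)`
all of whose branches vanish. White wins `G₂` by playing every `cₘ` infinitely often (at the
positions `⟨m,k⟩`), so that each tail of the play still meets every `cₘ`. Winning `G₂` implies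
winning `G₁`. Conversely, a winning strategy `σ` for `G₁` is a countable family indexed by
positions; if `B` were `(ω,2)`-distributive, some branch of it would meet `p`, and Black, answering
along that branch, would defeat `σ`.
-/

section Distributivity

variable {B : Type*} [CompleteBooleanAlgebra B]

lemma pickMove_eq_inf_compPow {p q : B} (hq : q ≤ p) (i : Bool) :
    pickMove p q i = p ⊓ compPow q i := by
  cases i
  · simpa [pickMove, compPow] using hq
  · simp [pickMove, compPow, sdiff_eq]

lemma pickMove_le {p q : B} (hq : q ≤ p) (i : Bool) : pickMove p q i ≤ p :=
  (pickMove_eq_inf_compPow hq i).trans_le inf_le_left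

lemma pickMove_inf_self (p a : B) (i : Bool) : pickMove p (p ⊓ a) i = p ⊓ compPow a i := by
  cases i
  · rfl
  · exact (sdiff_inf_self_left p a).trans (sdiff_eq (x := p))

lemma exists_le_compPow_of_inf_notMem_Ioo {p a : B} (h : p ⊓ a ∉ Set.Ioo ⊥ p) :
    ∃ j, p ≤ compPow a j := by
  by_cases hb : p ⊓ a = ⊥
  · exact ⟨true, le_compl_iff_disjoint_right.2 (disjoint_iff.2 hb)⟩
  · have hpa : p ⊓ a = p :=
      inf_le_left.eq_or_lt.resolve_right fun hlt => h ⟨bot_lt_iff_ne_bot.2 hb, hlt⟩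
    exact ⟨false, inf_eq_left.1 hpa⟩

lemma OmegaTwoDistributive.exists_inf_iInf_compPow_ne_bot (h : OmegaTwoDistributive B)
    {p : B} (hp : p ≠ ⊥) {ι : Type*} [Countable ι] [Nonempty ι] (a : ι → B) :
    ∃ f : ι → Bool, p ⊓ ⨅ x, compPow (a x) (f x) ≠ ⊥ := by
  obtain ⟨e, he⟩ := exists_surjective_nat ι
  by_contra! hf
  apply hp
  calc p = p ⊓ ⨆ f : ℕ → Bool, ⨅ n, compPow (a (e n)) (f n) := by
        rw [show (⨆ f : ℕ → Bool, ⨅ n, compPow (a (e n)) (f n)) = ⊤ from h (a ∘ e), inf_top_eq]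
    _ = ⨆ f : ℕ → Bool, p ⊓ ⨅ n, compPow (a (e n)) (f n) := inf_iSup_eq _ _
    _ = ⊥ := iSup_eq_bot.2 fun f => eq_bot_iff.2 <| calc
        p ⊓ ⨅ n, compPow (a (e n)) (f n)
          ≤ p ⊓ ⨅ x, compPow (a x) (f (Function.surjInv he x)) :=
            inf_le_inf_left p <| le_iInf fun x => by
              simpa only [Function.surjInv_eq he x] using
                iInf_le (fun n => compPow (a (e n)) (f n)) (Function.surjInv he x)
        _ = ⊥ := hf (f ∘ Function.surjInv he)

/-- Relativising a counterexample to distributivity to the complement `p` of its join;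
indices `n` where `p ⊓ aₙ` is `0` or `p` carry no information and are replaced by a
dummy move `r`. -/
lemma exists_moves_of_not_omegaTwoDistributive (h : ¬ OmegaTwoDistributive B) :
    ∃ p : B, p ≠ ⊥ ∧ ∃ c : ℕ → B, (∀ n, c n ∈ Set.Ioo ⊥ p) ∧
      ∀ f : ℕ → Bool, ⨅ n, pickMove p (c n) (f n) = ⊥ := by
  obtain ⟨a, ha⟩ : ∃ a : ℕ → B, (⨆ f : ℕ → Bool, ⨅ n, compPow (a n) (f n)) ≠ ⊤ := by
    simpa [OmegaTwoDistributive] using h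
  set p := (⨆ f : ℕ → Bool, ⨅ n, compPow (a n) (f n))ᶜ
  have hp : p ≠ ⊥ := by simpa [p] using ha
  have hbranch : ∀ f : ℕ → Bool, p ⊓ ⨅ n, compPow (a n) (f n) = ⊥ := fun f =>
    (disjoint_compl_left.mono_right
      (le_iSup (fun f : ℕ → Bool => ⨅ n, compPow (a n) (f n)) f)).eq_bot
  obtain ⟨r, hr⟩ : ∃ r, r ∈ Set.Ioo ⊥ p := by
    by_contra! hdeg
    choose j hj using fun n => exists_le_compPow_of_inf_notMem_Ioo (hdeg (p ⊓ a n))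
    exact hp (eq_bot_iff.2 ((le_inf le_rfl (le_iInf hj)).trans (hbranch j).le))
  classical
  set c : ℕ → B := fun n => if p ⊓ a n ∈ Set.Ioo ⊥ p then p ⊓ a n else r
  have hc : ∀ n, c n ∈ Set.Ioo ⊥ p := fun n => by
    by_cases hn : p ⊓ a n ∈ Set.Ioo ⊥ p
    · rwa [show c n = p ⊓ a n from if_pos hn]
    · rwa [show c n = r from if_neg hn]
  have hmove : ∀ n i, ∃ j, pickMove p (c n) i ≤ p ⊓ compPow (a n) j := fun n i => by
    by_cases hn : p ⊓ a n ∈ Set.Ioo ⊥ p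
    · rw [show c n = p ⊓ a n from if_pos hn, pickMove_inf_self]
      exact ⟨i, le_rfl⟩
    · obtain ⟨j, hj⟩ := exists_le_compPow_of_inf_notMem_Ioo hn
      rw [show c n = r from if_neg hn]
      exact ⟨j, le_inf (pickMove_le hr.2.le i) ((pickMove_le hr.2.le i).trans hj)⟩
  refine ⟨p, hp, c, hc, fun f => eq_bot_iff.2 ?_⟩
  choose j hj using hmove
  calc ⨅ n, pickMove p (c n) (f n) ≤ p ⊓ ⨅ n, compPow (a n) (j n (f n)) :=
        le_inf ((iInf_le _ 0).trans ((hj 0 _).trans inf_le_left))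
          (le_iInf fun n => (iInf_le _ n).trans ((hj n _).trans inf_le_right))
    _ = ⊥ := hbranch _

end Distributivity

section Strategies

variable {B : Type*} [CompleteBooleanAlgebra B]

lemma WhiteWS.mono {Win Win' : B → (ℕ → B) → (ℕ → Bool) → Prop}
    (hWin : ∀ p pn i, Win p pn i → Win' p pn i) : WhiteWS Win → WhiteWS Win' :=
  fun ⟨p, hp, σ, hσ, hwin⟩ => ⟨p, hp, σ, hσ, fun i => hWin _ _ _ (hwin i)⟩

lemma winG1_of_winG2 {p : B} {pn : ℕ → B} {i : ℕ → Bool} (h : WinG2 p pn i) : WinG1 p pn i :=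
  eq_bot_iff.2 <| h ▸ le_iSup_of_le 0 (le_iInf₂ fun n _ => iInf_le _ n)

lemma whiteWS_winG2_of_moves {p : B} (hp : p ≠ ⊥) {c : ℕ → B} (hc : ∀ n, c n ∈ Set.Ioo ⊥ p)
    (hbranch : ∀ f : ℕ → Bool, ⨅ n, pickMove p (c n) (f n) = ⊥) : WhiteWS (WinG2 (B := B)) := by
  refine ⟨p, hp, fun s => c s.length.unpair.1, fun s => hc _, fun i => ?_⟩
  refine iSup_eq_bot.2 fun k => eq_bot_iff.2 ?_
  calc ⨅ n, ⨅ _ : k ≤ n, pickMove p (whitePlays (fun s => c s.length.unpair.1) i n) (i n)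
        ≤ ⨅ m, pickMove p (c m) (i (Nat.pair m k)) :=
          le_iInf fun m => (iInf₂_le (Nat.pair m k) (Nat.right_le_pair m k)).trans_eq
            (by simp [whitePlays])
    _ = ⊥ := hbranch _

def feedbackHistory {α : Type*} (g : List α → α) : ℕ → List α
  | 0 => []
  | n + 1 => feedbackHistory g n ++ [g (feedbackHistory g n)]

lemma ofFn_feedbackHistory {α : Type*} (g : List α → α) (n : ℕ) :
    (List.ofFn fun k : Fin n => g (feedbackHistory g k)) = feedbackHistory g n := by
  induction n with
  | zero => rfl
  | succ n ih =>
    rw [List.ofFn_succ', List.concat_eq_append]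
    simp only [Fin.val_castSucc, Fin.val_last, ih, feedbackHistory]

lemma exists_forall_eq_apply_ofFn {α : Type*} (g : List α → α) :
    ∃ i : ℕ → α, ∀ n, i n = g (List.ofFn fun k : Fin n => i k) :=
  ⟨fun n => g (feedbackHistory g n), fun n => by rw [ofFn_feedbackHistory]⟩

lemma not_omegaTwoDistributive_of_whiteWS_winG1 (h : WhiteWS (WinG1 (B := B))) :
    ¬ OmegaTwoDistributive B := by
  obtain ⟨p, hp, σ, hσ, hwin⟩ := h
  intro hdist
  obtain ⟨g, hg⟩ := hdist.exists_inf_iInf_compPow_ne_bot hp σ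
  obtain ⟨i, hi⟩ := exists_forall_eq_apply_ofFn g
  refine hg (eq_bot_iff.2 ((le_iInf fun n => ?_).trans (hwin i).le))
  rw [whitePlays, pickMove_eq_inf_compPow (hσ _).2.le, hi n]
  exact inf_le_inf_left p (iInf_le _ _)

end Strategies

/-- `B` is not `(ω,2)`-distributive iff White has a w.s. in `G₁` iff White has a w.s. in `G₂`. -/
theorem stmt_3 {B : Type*} [CompleteBooleanAlgebra B] :
    (¬ OmegaTwoDistributive B ↔ WhiteWS (WinG1 (B := B))) ∧
    (WhiteWS (WinG1 (B := B)) ↔ WhiteWS (WinG2 (B := B))) := by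
  have hG2 : ¬ OmegaTwoDistributive B → WhiteWS (WinG2 (B := B)) := fun h => by
    obtain ⟨p, hp, c, hc, hbranch⟩ := exists_moves_of_not_omegaTwoDistributive h
    exact whiteWS_winG2_of_moves hp hc hbranch
  have hG1 : WhiteWS (WinG2 (B := B)) → WhiteWS (WinG1 (B := B)) :=
    WhiteWS.mono fun _ _ _ => winG1_of_winG2
  exact ⟨⟨fun h => hG1 (hG2 h), not_omegaTwoDistributive_of_whiteWS_winG1⟩,
    ⟨fun h => hG2 (not_omegaTwoDistributive_of_whiteWS_winG1 h), hG1⟩⟩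
end

section
/- Let B be a complete Boolean algebra, p ∈ B⁺, and w : 2^{<ω} → B with 0 ≤ w_φ ≤ p for all φ ∈ 2^{<ω}. If w satisfies (∗) below p, then the set S = {φ ∈ 2^{<ω} : w_φ ∈ {0, p}} is not dense in the ordering (2^{<ω}, ⊇); that is, there exists ψ ∈ 2^{<ω} such that w_φ ∈ (0,p) (i.e., 0 < w_φ < p) for every φ ∈ 2^{<ω} extending ψ. -/
/-!
If the nodes `φ` with `w φ ∈ {0, p}` were dense, every node would extend to such a `φ`, and at
that `φ` one of the two moves (`1` if `w φ = 0`, `0` if `w φ = p`) makes `w_φ^i = p`. Extending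
to such a node and appending that move, again and again, builds a branch `i` with
`w_{i↾n}^{i(n)} = p` for infinitely many `n`; the meet over this infinite set of `n` is then
`p ≠ 0`, contradicting (∗).
-/

namespace Stream'

variable {α : Type*}

theorem take_eq_ofFn (s : Stream' α) (n : ℕ) : s.take n = List.ofFn fun k : Fin n => s.get k :=
  List.ext_getElem (by simp) fun _ _ _ => by simp

theorem exists_take_length_eq_of_isPrefix_succ [Inhabited α] {L : ℕ → List α}
    (hL : ∀ k, L k <+: L (k + 1)) : ∃ s : Stream' α, ∀ k, s.take (L k).length = L k := by
  classical
  have hmono : ∀ ⦃k m⦄, k ≤ m → L k <+: L m := Nat.rel_of_forall_rel_succ_of_le (· <+: ·) hL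
  let s : Stream' α := fun n =>
    if h : ∃ k, n < (L k).length then (L h.choose)[n]'h.choose_spec else default
  have hs : ∀ n (h : ∃ k, n < (L k).length), s.get n = (L h.choose)[n]'h.choose_spec :=
    fun n h => dif_pos h
  refine ⟨s, fun k => List.ext_getElem (by simp) fun j _ hj => ?_⟩
  have hex : ∃ k, j < (L k).length := ⟨k, hj⟩
  rw [take_get, hs j hex]
  rcases le_total hex.choose k with h | h
  · exact (hmono h).getElem _
  · exact ((hmono h).getElem _).symm

theorem exists_infinite_setOf_take_of_forall_isPrefix (P : List α → α → Prop)
    (h : ∀ ψ, ∃ φ a, ψ <+: φ ∧ P φ a) : ∃ s : Stream' α, {n | P (s.take n) (s.get n)}.Infinite := by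
  choose φ a hpre hP using h
  have : Inhabited α := ⟨a []⟩
  let L : ℕ → List α := fun k => (fun ψ => φ ψ ++ [a ψ])^[k] []
  have hL : ∀ k, L (k + 1) = φ (L k) ++ [a (L k)] := fun k =>
    Function.iterate_succ_apply' _ k []
  obtain ⟨s, hs⟩ := exists_take_length_eq_of_isPrefix_succ (L := L) fun k => by
    rw [hL]; exact (hpre _).trans (List.prefix_append _ _)
  have hnode : ∀ k, s.take (φ (L k)).length = φ (L k) ∧ s.get (φ (L k)).length = a (L k) := by
    intro k
    have h := hs (k + 1)
    rw [hL, List.length_append, List.length_singleton, take_succ'] at h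
    simpa using List.append_inj' h rfl
  have hlen : StrictMono fun k => (φ (L k)).length := strictMono_nat_of_lt_succ fun k => by
    have hsucc : (L (k + 1)).length = (φ (L k)).length + 1 := by simp [hL]
    have := (hpre (L (k + 1))).length_le
    omega
  refine ⟨s, (Set.infinite_range_of_injective hlen.injective).mono ?_⟩
  rintro _ ⟨k, rfl⟩
  simpa only [Set.mem_ofPred_eq, (hnode k).1, (hnode k).2] using hP (L k)

end Stream'

theorem exists_pickMove_eq_self {B : Type*} [CompleteBooleanAlgebra B] {p q : B} (hq : q ≤ p)
    (h : q ∉ Set.Ioo ⊥ p) : ∃ b, pickMove p q b = p := by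
  by_cases hq0 : q = ⊥
  · exact ⟨true, by simp [pickMove, hq0]⟩
  · have hqp : q = p := by_contra fun hqp => h ⟨bot_lt_iff_ne_bot.2 hq0, hq.lt_of_ne hqp⟩
    exact ⟨false, by simp [pickMove, hqp]⟩

theorem SatisfiesStar.finite_setOf_pickMove_eq {B : Type*} [CompleteBooleanAlgebra B] {p : B}
    {w : List Bool → B} (hstar : SatisfiesStar p w) (hp : p ≠ ⊥) (i : ℕ → Bool) :
    {n | pickMove p (w (List.ofFn fun k : Fin n => i k)) (i n) = p}.Finite := by
  by_contra hinf
  apply hp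
  rw [eq_bot_iff, ← hstar i]
  refine le_trans ?_ (le_biSup _ hinf)
  exact le_iInf₂ fun n hn => hn.ge

/-- If `w : 2^{<ω} → [0,p]` satisfies (∗) below `p`, then
`{φ : w_φ ∈ {0,p}}` is not dense in `(2^{<ω}, ⊇)`: there is `ψ` such that
`w_φ ∈ (0,p)` for every `φ` extending `ψ`. -/
theorem stmt_6 {B : Type*} [CompleteBooleanAlgebra B] (p : B) (hp : p ≠ ⊥)
    (w : List Bool → B) (hw : ∀ φ : List Bool, w φ ≤ p)
    (hstar : SatisfiesStar p w) :
    ∃ ψ : List Bool, ∀ φ : List Bool, ψ <+: φ → w φ ∈ Set.Ioo ⊥ p := by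
  by_contra! hdense
  have hmove : ∀ ψ, ∃ φ b, ψ <+: φ ∧ pickMove p (w φ) b = p := fun ψ =>
    let ⟨φ, hψφ, hφ⟩ := hdense ψ
    let ⟨b, hb⟩ := exists_pickMove_eq_self (hw φ) hφ
    ⟨φ, b, hψφ, hb⟩
  obtain ⟨i, hi⟩ := Stream'.exists_infinite_setOf_take_of_forall_isPrefix _ hmove
  refine hi ((hstar.finite_setOf_pickMove_eq hp i).subset fun n hn => ?_)
  rw [Set.mem_ofPred_eq, Stream'.take_eq_ofFn] at hn
  exact hn
end

section
/- Let B be an (ω,2)-distributive complete Boolean algebra and let ⟨p, p₀, i₀, p₁, i₁, …⟩ be a play satisfying the rules of the games (p ∈ B⁺, 0 < pₙ < p, iₙ ∈ {0,1}). Then Black wins this play in the game G₃ if and only if Black wins it in the game G₄; that is, ⨆_{A⊆ω infinite} ⨅_{n∈A} pₙ^{iₙ} ≠ 0 if and only if ⨅_{k∈ω} ⨆_{n≥k} pₙ^{iₙ} ≠ 0. -/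
lemma key {B : Type*} [CompleteBooleanAlgebra B]
    (hd : ∀ a : ℕ → B, (⨆ f : ℕ → Bool, ⨅ n, compPow (a n) (f n)) = ⊤)
    (x : ℕ → B) :
    ((⨆ A ∈ {A : Set ℕ | A.Infinite}, ⨅ n ∈ A, x n) = ⊥) ↔
      ((⨅ k, ⨆ n, ⨆ _ : k ≤ n, x n) = ⊥) := by
  constructor
  · intro h3
    by_contra h4
    set u : B := ⨅ k, ⨆ n, ⨆ _ : k ≤ n, x n with hu
    have hdist : u = ⨆ f : ℕ → Bool, u ⊓ ⨅ n, compPow (x n) (f n) := by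
      rw [← inf_iSup_eq, hd x, inf_top_eq]
    obtain ⟨f, hf⟩ : ∃ f : ℕ → Bool, u ⊓ (⨅ n, compPow (x n) (f n)) ≠ ⊥ := by
      by_contra h
      push_neg at h
      apply h4
      rw [hdist]
      simp [h]
    set v : B := u ⊓ ⨅ n, compPow (x n) (f n) with hv
    by_cases hA : ({n : ℕ | f n = false} : Set ℕ).Infinite
    · apply hf
      rw [← le_bot_iff, ← h3]
      refine le_trans ?_ (le_iSup₂_of_le {n | f n = false} hA le_rfl)
      refine le_iInf₂ fun n hn => ?_
      have : compPow (x n) (f n) = x n := by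
        simp only [Set.mem_setOf_eq] at hn; simp [compPow, hn]
      exact le_trans inf_le_right (le_trans (iInf_le _ n) this.le)
    · rw [Set.not_infinite] at hA
      obtain ⟨N, hN⟩ := hA.bddAbove
      have hft : ∀ n, N + 1 ≤ n → f n = true := by
        intro n hn
        by_contra hc
        have : n ∈ {n : ℕ | f n = false} := by
          simp only [Set.mem_setOf_eq]; exact Bool.not_eq_true _ |>.mp hc
        exact absurd (hN this) (by omega)
      apply hf
      rw [← le_bot_iff]
      have h1 : v ≤ ⨆ n, ⨆ _ : N + 1 ≤ n, x n :=
        le_trans inf_le_left (iInf_le _ (N + 1))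
      have h2 : v ≤ (⨆ n, ⨆ _ : N + 1 ≤ n, x n)ᶜ := by
        rw [compl_iSup]
        refine le_iInf fun n => ?_
        rw [compl_iSup]
        refine le_iInf fun hn => ?_
        have : compPow (x n) (f n) = (x n)ᶜ := by simp [compPow, hft n hn]
        exact le_trans inf_le_right (le_trans (iInf_le _ n) this.le)
      calc v ≤ (⨆ n, ⨆ _ : N + 1 ≤ n, x n) ⊓ (⨆ n, ⨆ _ : N + 1 ≤ n, x n)ᶜ :=
              le_inf h1 h2
        _ = ⊥ := inf_compl_eq_bot
  · intro h4
    rw [← le_bot_iff, ← h4]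
    refine iSup₂_le fun A hA => le_iInf fun k => ?_
    obtain ⟨n, hnA, hkn⟩ := hA.exists_gt k
    exact le_trans (iInf₂_le n hnA) (le_iSup₂_of_le n hkn.le le_rfl)

/-- Over an `(ω,2)`-distributive complete Boolean algebra, Black wins a given legal
play in `G₃` iff Black wins it in `G₄`. -/
theorem stmt_8 {B : Type*} [CompleteBooleanAlgebra B] (hd : OmegaTwoDistributive B)
    (p : B) (hp : p ≠ ⊥) (pn : ℕ → B) (hpn : ∀ n, pn n ∈ Set.Ioo ⊥ p)
    (i : ℕ → Bool) :
    (¬ WinG3 p pn i) ↔ (¬ WinG4 p pn i) :=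
  not_congr (key hd fun n => pickMove p (pn n) (i n))
end
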